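/- arXiv:math/0003141 — 4 statements merged into one kernel-verified Lean document; each statement's English description precedes it below -/
import Mathlib

section
/- For every regular infinite cardinal κ, 𝔟_κ is a regular cardinal. -/
/-!
Below `κ` every family is bounded, pointwise even, because `κ` is regular; so `𝔟_κ ≥ κ` is
infinite. If `𝔟_κ` were singular, a minimal unbounded family could be split into `cf 𝔟_κ < 𝔟_κ`
pieces of size `< 𝔟_κ`. Each piece has a bound, and the fewer than `𝔟_κ` bounds have a common
bound, which then bounds the whole family.
-/

noncomputable section

open Cardinal Set

universe u

/-- `f <* g` : eventual domination of functions `κ → κ`. -/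
def almostLT (κ : Cardinal.{u}) (f g : κ.ord.ToType → κ.ord.ToType) : Prop :=
  ∃ β, ∀ α, β < α → f α < g α

/-- A family `B ⊆ κ^κ` is unbounded iff no `f` eventually dominates all its members. -/
def UnboundedFam (κ : Cardinal.{u}) (B : Set (κ.ord.ToType → κ.ord.ToType)) : Prop :=
  ∀ f : κ.ord.ToType → κ.ord.ToType, ∃ g ∈ B, ¬ almostLT κ g f

/-- `𝔟_κ` : the least cardinality of an unbounded family in `(κ^κ, <*)`. -/
def bInv (κ : Cardinal.{u}) : Cardinal.{u} :=
  sInf { c | ∃ B : Set (κ.ord.ToType → κ.ord.ToType), UnboundedFam κ B ∧ #B = c }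

/-- `A ⊂* B` : `|A \ B| < κ` and `|B \ A| = κ`. -/
def ssubStar (κ : Cardinal.{u}) (A B : Set κ.ord.ToType) : Prop :=
  #(A \ B : Set _) < κ ∧ #(B \ A : Set _) = κ

/-- A tower-witness: a family `T ⊆ [κ]^κ` with `|T| ≥ κ`, well ordered by `⊂*`,
such that every `C ∈ [κ]^κ` with co-κ-sized complement has some `A ∈ T` with
`|A \ C| = κ`. -/
def TowerWitness (κ : Cardinal.{u}) (T : Set (Set κ.ord.ToType)) : Prop :=
  (∀ A ∈ T, #A = κ) ∧
  κ ≤ #T ∧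
  IsWellOrder T (fun A B => ssubStar κ A.1 B.1) ∧
  ∀ C : Set κ.ord.ToType, #C = κ → #(Cᶜ : Set _) = κ →
    ∃ A ∈ T, #(A \ C : Set _) = κ

/-- `𝔱_κ` : the least cardinality of a tower-witness. -/
def tInv (κ : Cardinal.{u}) : Cardinal.{u} :=
  sInf { c | ∃ T : Set (Set κ.ord.ToType), TowerWitness κ T ∧ #T = c }

theorem Set.Bounded.of_mk_eq_of_isSingular {α : Type u} {r : α → α → Prop} [IsTrans α r]
    {c : Cardinal.{u}} (hc : c.IsSingular) (hsmall : ∀ s : Set α, #s < c → s.Bounded r)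
    {s : Set α} (hs : #s = c) : s.Bounded r := by
  obtain ⟨e⟩ : Nonempty (s ≃ c.ord.ToType) := Cardinal.eq.1 (by rw [hs, mk_ord_toType])
  obtain ⟨S, hS, hSc⟩ := Order.exists_cof_eq c.ord.ToType
  rw [Ordinal.cof_toType] at hSc
  let piece (t : c.ord.ToType) : Set α := Subtype.val '' (e ⁻¹' Iic t)
  have piece_small (t) : #(piece t) < c := by
    refine mk_image_le.trans_lt ((mk_preimage_equiv e _).trans_lt ?_)
    simpa using mk_Iic_lt t (by simp) (by simpa using hc.aleph0_le)
  choose F hF using fun t => hsmall (piece t) (piece_small t)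
  obtain ⟨g, hg⟩ := hsmall (F '' S) (mk_image_le.trans_lt (hSc ▸ hc.cof_ord_lt))
  refine ⟨g, fun x hx => ?_⟩
  obtain ⟨t, htS, ht⟩ := hS (e ⟨x, hx⟩)
  exact _root_.trans (hF t x ⟨⟨x, hx⟩, ht, rfl⟩) (hg (F t) (mem_image_of_mem F htS))

variable {κ : Cardinal.{u}}

theorem unboundedFam_iff {B : Set (κ.ord.ToType → κ.ord.ToType)} :
    UnboundedFam κ B ↔ B.Unbounded (almostLT κ) :=
  Iff.rfl

instance : IsTrans (κ.ord.ToType → κ.ord.ToType) (almostLT κ) where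
  trans _ _ _ := fun ⟨β₁, h₁⟩ ⟨β₂, h₂⟩ => ⟨max β₁ β₂, fun α hα =>
    (h₁ α ((le_max_left _ _).trans_lt hα)).trans (h₂ α ((le_max_right _ _).trans_lt hα))⟩

theorem unboundedFam_univ (hκ : ℵ₀ ≤ κ) : UnboundedFam κ univ := by
  have := Cardinal.noMaxOrder hκ
  refine fun f => ⟨f, mem_univ f, ?_⟩
  rintro ⟨β, hβ⟩
  obtain ⟨α, hα⟩ := exists_gt β
  exact lt_irrefl _ (hβ α hα)

theorem exists_unboundedFam_mk_eq_bInv (hκ : ℵ₀ ≤ κ) :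
    ∃ B, UnboundedFam κ B ∧ #B = bInv κ :=
  csInf_mem (s := {c | ∃ B, UnboundedFam κ B ∧ #B = c}) ⟨_, univ, unboundedFam_univ hκ, rfl⟩

theorem bounded_almostLT_of_mk_lt_bInv {B : Set (κ.ord.ToType → κ.ord.ToType)}
    (hB : #B < bInv κ) : B.Bounded (almostLT κ) := by
  rw [← not_unbounded_iff, ← unboundedFam_iff]
  exact fun hunb => hB.not_ge (csInf_le' ⟨B, hunb, rfl⟩)

theorem exists_forall_lt_of_mk_lt (hκ : κ.IsRegular) {X : Set κ.ord.ToType} (hX : #X < κ) :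
    ∃ b, ∀ x ∈ X, x < b :=
  not_isCofinal_iff.1 fun hcof =>
    (Order.cof_le hcof).not_gt (by rwa [Ordinal.cof_toType, hκ.cof_ord])

theorem bounded_almostLT_of_mk_lt (hκ : κ.IsRegular) {B : Set (κ.ord.ToType → κ.ord.ToType)}
    (hB : #B < κ) : B.Bounded (almostLT κ) := by
  have hrange (α : κ.ord.ToType) : #(range fun g : B => g.1 α) < κ := mk_range_le.trans_lt hB
  choose f hf using fun α => exists_forall_lt_of_mk_lt hκ (hrange α)
  have := nonempty_ord_toType hκ.ne_zero
  exact ⟨f, fun g hg => ⟨Classical.arbitrary _, fun α _ => hf α _ ⟨⟨g, hg⟩, rfl⟩⟩⟩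

theorem le_bInv (hκ : κ.IsRegular) : κ ≤ bInv κ := by
  obtain ⟨B, hB, hBc⟩ := exists_unboundedFam_mk_eq_bInv hκ.aleph0_le
  by_contra! hlt
  exact (not_bounded_iff B).2 hB (bounded_almostLT_of_mk_lt hκ (hBc ▸ hlt))

/-- For every regular infinite cardinal `κ`, `𝔟_κ` is regular. -/
theorem b_isRegular (κ : Cardinal.{u}) (hκ : κ.IsRegular) : (bInv κ).IsRegular := by
  have hℵ₀ : ℵ₀ ≤ bInv κ := hκ.aleph0_le.trans (le_bInv hκ)
  by_contra hreg
  obtain ⟨B, hB, hBc⟩ := exists_unboundedFam_mk_eq_bInv hκ.aleph0_le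
  exact (not_bounded_iff B).2 hB <| .of_mk_eq_of_isSingular (.of_not_isRegular hℵ₀ hreg)
    (fun _ => bounded_almostLT_of_mk_lt_bInv) hBc
end
end

section
/- In the (E,D̄)-setup: if A ⊆ κ is (E,D̄)-closed and A ∈ D^+(κ), then there exist two disjoint (E,D̄)-closed subsets B, C of A with B ∈ D^+(κ) and C ∈ D^+(κ). -/
noncomputable section

open Cardinal Set

universe u

/-- The generator `[α, κ) \ ⋃_{i<α} A_i` of the filter `D(κ)`. -/
def genD (κ : Cardinal.{u}) (A : κ.ord.ToType → Set κ.ord.ToType)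
    (α : κ.ord.ToType) : Set κ.ord.ToType :=
  {ξ | α ≤ ξ} \ ⋃ i ∈ Iio α, A i

/-- The filter `D(κ)` on `κ` generated by the sets `[α, κ) \ ⋃_{i<α} A_i`
(these generators are decreasing, so the filter is their upward closure). -/
def DK (κ : Cardinal.{u}) (A : κ.ord.ToType → Set κ.ord.ToType) :
    Set (Set κ.ord.ToType) :=
  {X | ∃ α, genD κ A α ⊆ X}

/-- `D^+(κ)`: the sets whose complement is not in `D(κ)`. -/
def DKplus (κ : Cardinal.{u}) (A : κ.ord.ToType → Set κ.ord.ToType) :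
    Set (Set κ.ord.ToType) :=
  {X | Xᶜ ∉ DK κ A}

/-- `X =_{D(κ)} 0`, i.e. `κ \ X ∈ D(κ)`. -/
def DKzero (κ : Cardinal.{u}) (A : κ.ord.ToType → Set κ.ord.ToType)
    (X : Set κ.ord.ToType) : Prop :=
  Xᶜ ∈ DK κ A

/-- `X ⊂*_{D(κ)} Y` : `X \ Y =_{D(κ)} 0` and `Y \ X ∈ D^+(κ)`. -/
def DKssub (κ : Cardinal.{u}) (A : κ.ord.ToType → Set κ.ord.ToType)
    (X Y : Set κ.ord.ToType) : Prop :=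
  DKzero κ A (X \ Y) ∧ (Y \ X) ∈ DKplus κ A

/-- The filter `D^δ` on `δ` generated by the sets `[α, δ) \ ⋃_{i<α} A_i` for `α < δ`;
its members are regarded as subsets of `Iio δ`. -/
def Ddelta (κ : Cardinal.{u}) (A : κ.ord.ToType → Set κ.ord.ToType)
    (δ : κ.ord.ToType) : Set (Set κ.ord.ToType) :=
  {X | X ⊆ Iio δ ∧ ∃ α, α < δ ∧ genD κ A α ∩ Iio δ ⊆ X}

/-- `D` is a proper filter on the ambient set `S`. -/
def IsProperFilterOn (κ : Cardinal.{u}) (S : Set κ.ord.ToType)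
    (D : Set (Set κ.ord.ToType)) : Prop :=
  S ∈ D ∧ ∅ ∉ D ∧ (∀ X ∈ D, X ⊆ S) ∧
  (∀ X ∈ D, ∀ Y, X ⊆ Y → Y ⊆ S → Y ∈ D) ∧
  (∀ X ∈ D, ∀ Y ∈ D, X ∩ Y ∈ D)

/-- The filter on the ambient set `S` generated by a filter `base` together with a
further family `G` of sets. -/
def GenOver (κ : Cardinal.{u}) (S : Set κ.ord.ToType)
    (base G : Set (Set κ.ord.ToType)) : Set (Set κ.ord.ToType) :=
  {X | X ⊆ S ∧ ∃ Y ∈ base, ∃ s ⊆ G, s.Finite ∧ Y ∩ ⋂₀ s ⊆ X}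

/-- `C` is closed unbounded in `κ`. -/
def IsClubIn (κ : Cardinal.{u}) (C : Set κ.ord.ToType) : Prop :=
  (∀ α, ∃ ξ ∈ C, α < ξ) ∧
  (∀ ξ, (∃ η, η < ξ) → (∀ η, η < ξ → ∃ c ∈ C, η < c ∧ c < ξ) → ξ ∈ C)

/-- `δ` is a limit element of `κ`: nonminimal, with no largest element below it. -/
def IsLimitElt (κ : Cardinal.{u}) (δ : κ.ord.ToType) : Prop :=
  (∃ η, η < δ) ∧ ∀ η, η < δ → ∃ η', η < η' ∧ η' < δ

/-- The `(E, D̄)`-setup: `κ` is regular uncountable with `κ^{<κ} = κ`;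
`A i` (`i < κ`) are pairwise disjoint subsets of `κ ∖ (i+1)` of size `κ` covering
`κ ∖ {0}`; `E` is a set of limit ordinals `δ < κ`, containing a club, such that each
`A α ∩ δ` (`α < δ`) is unbounded in `δ`; `delta ζ` is the unique `δ ∈ E` with
`ζ ∈ A δ`; and `D ζ` (for `ζ ∈ A* = ⋃_{δ∈E} A δ`) is a proper filter on `δ_ζ`
extending `D^{δ_ζ}`, generated over it by fewer than `κ` sets, such that every such
filter occurs as `D ζ` for `κ` many `ζ ∈ A δ`. -/
structure EDSetup (κ : Cardinal.{u}) where
  A : κ.ord.ToType → Set κ.ord.ToType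
  E : Set κ.ord.ToType
  D : κ.ord.ToType → Set (Set κ.ord.ToType)
  delta : κ.ord.ToType → κ.ord.ToType
  hreg : κ.IsRegular
  hunc : ℵ₀ < κ
  hpow : κ ^< κ = κ
  hdisj : ∀ i j, i ≠ j → Disjoint (A i) (A j)
  hgt : ∀ i, ∀ ξ ∈ A i, i < ξ
  hAcard : ∀ i, #(A i) = κ
  hcover : (⋃ i, A i) = {ξ | ∃ η, η < ξ}
  hElim : ∀ δ ∈ E, IsLimitElt κ δ
  hEunb : ∀ δ ∈ E, ∀ α, α < δ → ∀ β, β < δ → ∃ ξ ∈ A α, β < ξ ∧ ξ < δ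
  hEclub : ∃ C ⊆ E, IsClubIn κ C
  hdelta : ∀ δ ∈ E, ∀ ζ ∈ A δ, delta ζ = δ
  hDfilter : ∀ δ ∈ E, ∀ ζ ∈ A δ, IsProperFilterOn κ (Iio δ) (D ζ)
  hDgen : ∀ δ ∈ E, ∀ ζ ∈ A δ,
    ∃ G : Set (Set κ.ord.ToType), #G < κ ∧ D ζ = GenOver κ (Iio δ) (Ddelta κ A δ) G
  hDall : ∀ δ ∈ E, ∀ Df : Set (Set κ.ord.ToType),
    IsProperFilterOn κ (Iio δ) Df →
    (∃ G : Set (Set κ.ord.ToType), #G < κ ∧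
        Df = GenOver κ (Iio δ) (Ddelta κ A δ) G) →
    #({ζ ∈ A δ | D ζ = Df} : Set κ.ord.ToType) = κ

/-- `A* = ⋃_{δ ∈ E} A_δ`. -/
def Astar (κ : Cardinal.{u}) (S : EDSetup κ) : Set κ.ord.ToType :=
  ⋃ δ ∈ S.E, S.A δ

/-- `X` is `(E, D̄)`-closed: whenever `ζ ∈ A*` and `X ∩ δ_ζ ∈ D_ζ`, also `ζ ∈ X`. -/
def EDClosed (κ : Cardinal.{u}) (S : EDSetup κ) (X : Set κ.ord.ToType) : Prop :=
  ∀ ζ ∈ Astar κ S, X ∩ Iio (S.delta ζ) ∈ S.D ζ → ζ ∈ X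

/-- `cl(X)`: the smallest `(E, D̄)`-closed subset of `κ` containing `X`. -/
def EDcl (κ : Cardinal.{u}) (S : EDSetup κ) (X : Set κ.ord.ToType) :
    Set κ.ord.ToType :=
  ⋂₀ {Y | EDClosed κ S Y ∧ X ⊆ Y}

/-!
Choose `f α ∈ X ∩ genD α` for every `α`. At each `δ ∈ E` closed under `f`, the set `X ∩ δ` is
positive for `D^δ`, so the filter `F_δ` generated by `D^δ` and `X ∩ δ` equals `D_ζ` for `κ` many
`ζ ∈ A_δ`, all of which lie in `X` because `X` is closed. Pick two of them, `u δ ≠ v δ`, and let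
`P` be the points of a club inside `E` that are closed under `f`, `u` and `v`. The closures of
`u[P]` and `v[P]` lie in `X` and are positive because `P` is unbounded. They are disjoint by
induction on a common point `ζ`: if `ζ = u δ₀` and `cl(v[P]) ∩ δ₀ ∈ D_ζ = F_δ₀`, then
`cl(v[P]) ⊇ genD γ ∩ X ∩ δ₀` for some `γ < δ₀`. Either some `δ ∈ P ∩ [γ, δ₀)` yields the smaller
common point `u δ`, or `v[P]` misses an interval `(β, δ₀)`; its closure then misses the points of
`genD β'` in that interval for `β' > β`, which contradicts the positivity of `X` at `δ₀`.
-/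

section Regular

variable {κ : Cardinal.{u}}

lemma exists_gt_of_mk_lt (hreg : κ.IsRegular) {s : Set κ.ord.ToType} (hs : #s < κ) :
    ∃ γ, ∀ x ∈ s, x < γ :=
  not_isCofinal_iff.1 fun hc =>
    (Order.cof_le hc).not_gt (by rwa [Ordinal.cof_toType, hreg.cof_ord])

lemma mk_Iic_lt (hreg : κ.IsRegular) (β : κ.ord.ToType) : #(Iic β) < κ := by
  have hIio : #(Iio β) < κ := by simpa using mk_Iio_lt β (by simp)
  rw [← Iio_insert]
  exact mk_insert_le.trans_lt
    (add_lt_of_lt hreg.aleph0_le hIio (one_lt_aleph0.trans_le hreg.aleph0_le))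

lemma exists_gt_image_Iic (hreg : κ.IsRegular) (g : κ.ord.ToType → κ.ord.ToType)
    (β : κ.ord.ToType) : ∃ γ, β < γ ∧ ∀ x ≤ β, g x < γ := by
  have hs : #(insert β (g '' Iic β) : Set κ.ord.ToType) < κ :=
    mk_insert_le.trans_lt (add_lt_of_lt hreg.aleph0_le (mk_image_le.trans_lt (mk_Iic_lt hreg β))
      (one_lt_aleph0.trans_le hreg.aleph0_le))
  obtain ⟨γ, hγ⟩ := exists_gt_of_mk_lt hreg hs
  exact ⟨γ, hγ β (mem_insert _ _), fun x hx => hγ _ (mem_insert_of_mem _ (mem_image_of_mem g hx))⟩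

lemma exists_sup_of_nat (hreg : κ.IsRegular) (hunc : ℵ₀ < κ) (a : ℕ → κ.ord.ToType) :
    ∃ δ, (∀ n, a n < δ) ∧ ∀ x < δ, ∃ n, x ≤ a n := by
  obtain ⟨γ, hγ⟩ := exists_gt_of_mk_lt hreg ((countable_range a).le_aleph0.trans_lt hunc)
  obtain ⟨δ, hδ, hmin⟩ := wellFounded_lt.has_min {y | ∀ n, a n < y}
    ⟨γ, fun n => hγ _ (mem_range_self n)⟩
  refine ⟨δ, hδ, fun x hx => ?_⟩
  by_contra! h
  exact hmin x h hx

lemma exists_closurePoint (hreg : κ.IsRegular) (hunc : ℵ₀ < κ) {C : Set κ.ord.ToType}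
    (hC : IsClubIn κ C) (g : κ.ord.ToType → κ.ord.ToType) (α : κ.ord.ToType) :
    ∃ δ ∈ C, α < δ ∧ ∀ x < δ, g x < δ := by
  have step : ∀ β, ∃ β' ∈ C, β < β' ∧ ∀ x ≤ β, g x < β' := fun β => by
    obtain ⟨γ, hβγ, hγ⟩ := exists_gt_image_Iic hreg g β
    obtain ⟨β', hβ'C, hγβ'⟩ := hC.1 γ
    exact ⟨β', hβ'C, hβγ.trans hγβ', fun x hx => (hγ x hx).trans hγβ'⟩
  choose next hnextC hlt hnext using step
  obtain ⟨a₀, ha₀C, hαa₀⟩ := hC.1 α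
  have hsucc : ∀ n, next^[n + 1] a₀ = next (next^[n] a₀) :=
    fun n => Function.iterate_succ_apply' next n a₀
  obtain ⟨δ, haδ, hδ⟩ := exists_sup_of_nat hreg hunc fun n => next^[n] a₀
  refine ⟨δ, hC.2 δ ⟨α, hαa₀.trans (haδ 0)⟩ fun η hη => ?_, hαa₀.trans (haδ 0), fun x hx => ?_⟩
  · obtain ⟨n, hn⟩ := hδ η hη
    exact ⟨_, hsucc n ▸ hnextC _, hn.trans_lt (hsucc n ▸ hlt _), haδ (n + 1)⟩
  · obtain ⟨n, hn⟩ := hδ x hx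
    exact (hnext _ x hn).trans (hsucc n ▸ haδ (n + 1))

end Regular

section Setup

variable {κ : Cardinal.{u}}

lemma antitone_genD {A : κ.ord.ToType → Set κ.ord.ToType} : Antitone (genD κ A) := by
  intro β α h ξ ⟨h1, h2⟩
  refine ⟨h.trans h1, fun hm => h2 ?_⟩
  simp only [mem_iUnion, mem_Iio] at hm ⊢
  obtain ⟨i, hi, hx⟩ := hm
  exact ⟨i, hi.trans_le h, hx⟩

lemma inter_genD_nonempty {A : κ.ord.ToType → Set κ.ord.ToType} {X : Set κ.ord.ToType}
    (hX : X ∈ DKplus κ A) (α : κ.ord.ToType) : (genD κ A α ∩ X).Nonempty := by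
  by_contra h
  exact hX ⟨α, fun ξ hξ hξX => h ⟨ξ, hξ, hξX⟩⟩

lemma DKplus_mono {A : κ.ord.ToType → Set κ.ord.ToType} {X Y : Set κ.ord.ToType} (hXY : X ⊆ Y)
    (hX : X ∈ DKplus κ A) : Y ∈ DKplus κ A :=
  fun ⟨α, hα⟩ => hX ⟨α, hα.trans (compl_subset_compl.2 hXY)⟩

variable (S : EDSetup κ)

lemma eq_of_mem_A {ξ δ δ' : κ.ord.ToType} (h : ξ ∈ S.A δ) (h' : ξ ∈ S.A δ') : δ = δ' := by
  by_contra hne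
  exact disjoint_left.1 (S.hdisj δ δ' hne) h h'

lemma mem_genD_of_mem_A {γ δ ξ : κ.ord.ToType} (hγδ : γ ≤ δ) (hξ : ξ ∈ S.A δ) :
    ξ ∈ genD κ S.A γ := by
  refine ⟨hγδ.trans (S.hgt δ ξ hξ).le, fun hm => ?_⟩
  simp only [mem_iUnion, mem_Iio] at hm
  obtain ⟨i, hi, hξi⟩ := hm
  exact (hi.trans_le hγδ).ne (eq_of_mem_A S hξi hξ)

lemma mem_DKplus_image {P : Set κ.ord.ToType} (hP : ∀ α, ∃ δ ∈ P, α < δ)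
    {u : κ.ord.ToType → κ.ord.ToType} (hu : ∀ δ ∈ P, u δ ∈ S.A δ) : u '' P ∈ DKplus κ S.A := by
  rintro ⟨α, hα⟩
  obtain ⟨δ, hδ, hαδ⟩ := hP α
  exact hα (mem_genD_of_mem_A S hαδ.le (hu δ hδ)) (mem_image_of_mem u hδ)

lemma delta_spec {ζ : κ.ord.ToType} (hζ : ζ ∈ Astar κ S) :
    S.delta ζ ∈ S.E ∧ ζ ∈ S.A (S.delta ζ) := by
  simp only [Astar, mem_iUnion] at hζ
  obtain ⟨δ, hδ, hA⟩ := hζ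
  rw [S.hdelta δ hδ ζ hA]
  exact ⟨hδ, hA⟩

lemma delta_lt {ζ : κ.ord.ToType} (hζ : ζ ∈ Astar κ S) : S.delta ζ < ζ :=
  S.hgt _ ζ (delta_spec S hζ).2

lemma le_delta_of_mem_genD {γ ζ : κ.ord.ToType} (hζ : ζ ∈ Astar κ S)
    (h : ζ ∈ genD κ S.A γ) : γ ≤ S.delta ζ :=
  not_lt.1 fun hlt => h.2 (mem_biUnion hlt (delta_spec S hζ).2)

lemma isProperFilterOn_D {ζ : κ.ord.ToType} (hζ : ζ ∈ Astar κ S) :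
    IsProperFilterOn κ (Iio (S.delta ζ)) (S.D ζ) :=
  S.hDfilter _ (delta_spec S hζ).1 ζ (delta_spec S hζ).2

lemma nonempty_of_mem_D {ζ : κ.ord.ToType} (hζ : ζ ∈ Astar κ S) {T : Set κ.ord.ToType}
    (hT : T ∈ S.D ζ) : T.Nonempty :=
  nonempty_iff_ne_empty.2 fun h => (isProperFilterOn_D S hζ).2.1 (h ▸ hT)

lemma D_mono {ζ : κ.ord.ToType} (hζ : ζ ∈ Astar κ S) {T T' : Set κ.ord.ToType}
    (hT : T ∈ S.D ζ) (h : T ⊆ T') (h' : T' ⊆ Iio (S.delta ζ)) : T' ∈ S.D ζ :=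
  (isProperFilterOn_D S hζ).2.2.2.1 T hT T' h h'

lemma inter_mem_D {ζ : κ.ord.ToType} (hζ : ζ ∈ Astar κ S) {T T' : Set κ.ord.ToType}
    (hT : T ∈ S.D ζ) (hT' : T' ∈ S.D ζ) : T ∩ T' ∈ S.D ζ :=
  (isProperFilterOn_D S hζ).2.2.2.2 T hT T' hT'

lemma genD_inter_Iio_mem_D {ζ γ : κ.ord.ToType} (hζ : ζ ∈ Astar κ S) (hγ : γ < S.delta ζ) :
    genD κ S.A γ ∩ Iio (S.delta ζ) ∈ S.D ζ := by
  obtain ⟨G, -, hGen⟩ := S.hDgen _ (delta_spec S hζ).1 ζ (delta_spec S hζ).2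
  rw [hGen]
  refine ⟨inter_subset_right, genD κ S.A γ ∩ Iio _, ⟨inter_subset_right, γ, hγ, subset_rfl⟩,
    ∅, empty_subset _, finite_empty, ?_⟩
  simp

end Setup

section Closure

variable {κ : Cardinal.{u}} (S : EDSetup κ)

lemma mem_EDcl {X : Set κ.ord.ToType} {ζ : κ.ord.ToType} :
    ζ ∈ EDcl κ S X ↔ ∀ Y, EDClosed κ S Y → X ⊆ Y → ζ ∈ Y := by
  simp only [EDcl, mem_sInter, mem_ofPred_eq, and_imp]

lemma subset_EDcl (X : Set κ.ord.ToType) : X ⊆ EDcl κ S X :=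
  fun _ hx => (mem_EDcl S).2 fun _ _ hXY => hXY hx

lemma EDcl_subset {X Y : Set κ.ord.ToType} (hY : EDClosed κ S Y) (hXY : X ⊆ Y) :
    EDcl κ S X ⊆ Y :=
  fun _ hx => (mem_EDcl S).1 hx Y hY hXY

lemma edClosed_EDcl (X : Set κ.ord.ToType) : EDClosed κ S (EDcl κ S X) := by
  intro ζ hζ hmem
  refine (mem_EDcl S).2 fun Y hY hXY => hY ζ hζ (D_mono S hζ hmem ?_ inter_subset_right)
  exact inter_subset_inter_left _ (EDcl_subset S hY hXY)

lemma mem_EDcl_cases {X : Set κ.ord.ToType} {ζ : κ.ord.ToType} (hζ : ζ ∈ EDcl κ S X) :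
    ζ ∈ X ∨ (ζ ∈ Astar κ S ∧ EDcl κ S X ∩ Iio (S.delta ζ) ∈ S.D ζ) := by
  set Z := {ρ | ρ ∈ X ∨ (ρ ∈ Astar κ S ∧ EDcl κ S X ∩ Iio (S.delta ρ) ∈ S.D ρ)}
  have hZ : EDcl κ S X ⊆ EDcl κ S X ∩ Z := by
    refine EDcl_subset S (fun ρ hρ hmem => ?_) fun x hx => ⟨subset_EDcl S X hx, Or.inl hx⟩
    have h : EDcl κ S X ∩ Iio (S.delta ρ) ∈ S.D ρ :=
      D_mono S hρ hmem (inter_subset_inter_left _ inter_subset_left) inter_subset_right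
    exact ⟨edClosed_EDcl S X ρ hρ h, Or.inr ⟨hρ, h⟩⟩
  exact (hZ hζ).2

lemma mem_or_cofinal_of_mem_EDcl {X : Set κ.ord.ToType} {ρ : κ.ord.ToType}
    (hρ : ρ ∈ EDcl κ S X) :
    ρ ∈ X ∨ (ρ ∈ Astar κ S ∧ ∀ γ < S.delta ρ, ∃ c ∈ X, γ < c ∧ c < S.delta ρ) := by
  induction ρ using WellFoundedLT.induction with
  | ind ρ IH =>
  rcases mem_EDcl_cases S hρ with h | ⟨hA, hcap⟩
  · exact Or.inl h
  refine Or.inr ⟨hA, fun γ hγ => ?_⟩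
  obtain ⟨γ', hγγ', hγ'δ⟩ := (S.hElim _ (delta_spec S hA).1).2 γ hγ
  obtain ⟨τ, ⟨hτcl, hτδ⟩, hτgen, -⟩ :=
    nonempty_of_mem_D S hA (inter_mem_D S hA hcap (genD_inter_Iio_mem_D S hA hγ'δ))
  rcases IH τ (hτδ.trans (delta_lt S hA)) hτcl with h | ⟨hτA, hcof⟩
  · exact ⟨τ, h, hγγ'.trans_le hτgen.1, hτδ⟩
  · obtain ⟨c, hc, hγc, hcδτ⟩ := hcof γ (hγγ'.trans_le (le_delta_of_mem_genD S hτA hτgen))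
    exact ⟨c, hc, hγc, hcδτ.trans ((delta_lt S hτA).trans hτδ)⟩

lemma notMem_EDcl_of_gap {V : Set κ.ord.ToType} {β β' δ ρ : κ.ord.ToType}
    (hgap : ∀ c ∈ V, c ∉ Ioo β δ) (hββ' : β < β') (hρ : ρ ∈ genD κ S.A β') (hρδ : ρ < δ) :
    ρ ∉ EDcl κ S V := by
  intro hρV
  rcases mem_or_cofinal_of_mem_EDcl S hρV with hρV | ⟨hρA, hcof⟩
  · exact hgap ρ hρV ⟨hββ'.trans_le hρ.1, hρδ⟩
  · obtain ⟨c, hc, hβc, hcδ⟩ := hcof β (hββ'.trans_le (le_delta_of_mem_genD S hρA hρ))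
    exact hgap c hc ⟨hβc, hcδ.trans ((delta_lt S hρA).trans hρδ)⟩

end Closure

section Seeds

variable {κ : Cardinal.{u}}

def adjoinFilter (A : κ.ord.ToType → Set κ.ord.ToType) (X : Set κ.ord.ToType)
    (δ : κ.ord.ToType) : Set (Set κ.ord.ToType) :=
  GenOver κ (Iio δ) (Ddelta κ A δ) {X ∩ Iio δ}

lemma mem_adjoinFilter {A : κ.ord.ToType → Set κ.ord.ToType} {X T : Set κ.ord.ToType}
    {δ : κ.ord.ToType} :
    T ∈ adjoinFilter A X δ ↔ T ⊆ Iio δ ∧ ∃ γ < δ, genD κ A γ ∩ X ∩ Iio δ ⊆ T := by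
  constructor
  · rintro ⟨hT, Y, ⟨-, γ, hγ, hgen⟩, s, hs, -, hsub⟩
    refine ⟨hT, γ, hγ, ?_⟩
    rintro ρ ⟨⟨hρg, hρX⟩, hρδ⟩
    refine hsub ⟨hgen ⟨hρg, hρδ⟩, fun t ht => ?_⟩
    obtain rfl := mem_singleton_iff.1 (hs ht)
    exact ⟨hρX, hρδ⟩
  · rintro ⟨hT, γ, hγ, hsub⟩
    refine ⟨hT, genD κ A γ ∩ Iio δ, ⟨inter_subset_right, γ, hγ, subset_rfl⟩,
      {X ∩ Iio δ}, subset_rfl, finite_singleton _, ?_⟩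
    rw [sInter_singleton]
    rintro ρ ⟨⟨hρg, hρδ⟩, hρX, -⟩
    exact hsub ⟨⟨hρg, hρX⟩, hρδ⟩

lemma isProperFilterOn_adjoinFilter {A : κ.ord.ToType → Set κ.ord.ToType}
    {X : Set κ.ord.ToType} {δ : κ.ord.ToType} (hδ : ∃ γ, γ < δ)
    (hX : ∀ γ < δ, (genD κ A γ ∩ X ∩ Iio δ).Nonempty) :
    IsProperFilterOn κ (Iio δ) (adjoinFilter A X δ) := by
  obtain ⟨γ₀, hγ₀⟩ := hδ
  refine ⟨mem_adjoinFilter.2 ⟨subset_rfl, γ₀, hγ₀, inter_subset_right⟩, fun h => ?_,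
    fun T hT => (mem_adjoinFilter.1 hT).1, fun T hT T' hTT' hT' => ?_, fun T hT T' hT' => ?_⟩
  · obtain ⟨-, γ, hγ, hsub⟩ := mem_adjoinFilter.1 h
    obtain ⟨ρ, hρ⟩ := hX γ hγ
    exact hsub hρ
  · obtain ⟨-, γ, hγ, hsub⟩ := mem_adjoinFilter.1 hT
    exact mem_adjoinFilter.2 ⟨hT', γ, hγ, hsub.trans hTT'⟩
  · obtain ⟨hTδ, γ, hγ, hsub⟩ := mem_adjoinFilter.1 hT
    obtain ⟨-, γ', hγ', hsub'⟩ := mem_adjoinFilter.1 hT'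
    refine mem_adjoinFilter.2 ⟨inter_subset_left.trans hTδ, max γ γ', max_lt hγ hγ', ?_⟩
    rintro ρ ⟨⟨hρg, hρX⟩, hρδ⟩
    exact ⟨hsub ⟨⟨antitone_genD (le_max_left γ γ') hρg, hρX⟩, hρδ⟩,
      hsub' ⟨⟨antitone_genD (le_max_right γ γ') hρg, hρX⟩, hρδ⟩⟩

/-- `X ∩ δ` is `D^δ`-positive, at a point `δ ∈ E`. -/
def IsPositiveAt (S : EDSetup κ) (X : Set κ.ord.ToType) (δ : κ.ord.ToType) : Prop :=
  δ ∈ S.E ∧ ∀ γ < δ, (genD κ S.A γ ∩ X ∩ Iio δ).Nonempty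

def IsSeed (S : EDSetup κ) (X : Set κ.ord.ToType) (δ ζ : κ.ord.ToType) : Prop :=
  ζ ∈ S.A δ ∧ ζ ∈ X ∧ S.D ζ = adjoinFilter S.A X δ

variable (S : EDSetup κ) {X : Set κ.ord.ToType}

lemma exists_two_seeds (hcl : EDClosed κ S X) {δ : κ.ord.ToType} (hδ : IsPositiveAt S X δ) :
    ∃ ζ ζ', ζ ≠ ζ' ∧ IsSeed S X δ ζ ∧ IsSeed S X δ ζ' := by
  obtain ⟨γ₀, hγ₀⟩ := (S.hElim δ hδ.1).1
  have hF := isProperFilterOn_adjoinFilter ⟨γ₀, hγ₀⟩ hδ.2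
  have hG : #({X ∩ Iio δ} : Set (Set κ.ord.ToType)) < κ := by
    rw [mk_singleton]
    exact one_lt_aleph0.trans S.hunc
  have hnt : {ζ ∈ S.A δ | S.D ζ = adjoinFilter S.A X δ}.Nontrivial := by
    rw [← nontrivial_coe_sort, ← one_lt_iff_nontrivial, S.hDall δ hδ.1 _ hF ⟨_, hG, rfl⟩]
    exact one_lt_aleph0.trans S.hunc
  have hX : ∀ ζ ∈ S.A δ, S.D ζ = adjoinFilter S.A X δ → ζ ∈ X := by
    intro ζ hζ hD
    refine hcl ζ (mem_biUnion hδ.1 hζ) ?_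
    rw [S.hdelta δ hδ.1 ζ hζ, hD]
    exact mem_adjoinFilter.2 ⟨inter_subset_right, γ₀, hγ₀, fun ρ hρ => ⟨hρ.1.2, hρ.2⟩⟩
  obtain ⟨ζ, ⟨hζ, hζD⟩, ζ', ⟨hζ', hζ'D⟩, hne⟩ := hnt
  exact ⟨ζ, ζ', hne, ⟨hζ, hX ζ hζ hζD, hζD⟩, ⟨hζ', hX ζ' hζ' hζ'D, hζ'D⟩⟩

structure IsSeedFamily (S : EDSetup κ) (X P : Set κ.ord.ToType)
    (u : κ.ord.ToType → κ.ord.ToType) : Prop where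
  isPositiveAt : ∀ δ ∈ P, IsPositiveAt S X δ
  isSeed : ∀ δ ∈ P, IsSeed S X δ (u δ)
  apply_lt : ∀ δ ∈ P, ∀ x ∈ P, x < δ → u x < δ

namespace IsSeedFamily

variable {S} {P : Set κ.ord.ToType} {u v : κ.ord.ToType → κ.ord.ToType}

lemma image_subset (hu : IsSeedFamily S X P u) : u '' P ⊆ X := by
  rintro _ ⟨δ, hδ, rfl⟩
  exact (hu.isSeed δ hδ).2.1

lemma lt_apply (hu : IsSeedFamily S X P u) {δ : κ.ord.ToType} (hδ : δ ∈ P) : δ < u δ :=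
  S.hgt δ _ (hu.isSeed δ hδ).1

lemma exists_gap (hv : IsSeedFamily S X P v) {γ δ₀ : κ.ord.ToType} (hγ : γ < δ₀)
    (hbelow : ∀ δ ∈ P, δ < δ₀ → δ < γ) :
    ∃ β, γ ≤ β ∧ β < δ₀ ∧ ∀ c ∈ v '' P, c ∉ Ioo β δ₀ := by
  have hsmall : ∀ δ ∈ P, v δ < δ₀ → δ < γ :=
    fun δ hδ h => hbelow δ hδ ((hv.lt_apply hδ).trans h)
  by_cases hc : ∃ c ∈ v '' P, c ∈ Ioo γ δ₀
  · obtain ⟨_, ⟨δ₁, hδ₁, rfl⟩, hγc, hcδ₀⟩ := hc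
    refine ⟨v δ₁, hγc.le, hcδ₀, ?_⟩
    rintro _ ⟨δ₂, hδ₂, rfl⟩ ⟨h₁, h₂⟩
    rcases lt_trichotomy δ₁ δ₂ with h | rfl | h
    · exact ((hv.apply_lt δ₂ hδ₂ δ₁ hδ₁ h).trans (hsmall δ₂ hδ₂ h₂)).not_gt hγc
    · exact lt_irrefl _ h₁
    · exact ((hv.apply_lt δ₁ hδ₁ δ₂ hδ₂ h).trans (hsmall δ₁ hδ₁ hcδ₀)).not_gt (hγc.trans h₁)
  · exact ⟨γ, le_rfl, hγ, fun c hcv hcI => hc ⟨c, hcv, hcI⟩⟩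

lemma exists_lt_mem_EDcl_inter (hu : IsSeedFamily S X P u) (hv : IsSeedFamily S X P v)
    {δ₀ : κ.ord.ToType} (hδ₀ : δ₀ ∈ P)
    (h : EDcl κ S (v '' P) ∩ Iio (S.delta (u δ₀)) ∈ S.D (u δ₀)) :
    ∃ τ < u δ₀, τ ∈ EDcl κ S (u '' P) ∧ τ ∈ EDcl κ S (v '' P) := by
  have hδ₀E := (hu.isPositiveAt δ₀ hδ₀).1
  rw [S.hdelta δ₀ hδ₀E _ (hu.isSeed δ₀ hδ₀).1, (hu.isSeed δ₀ hδ₀).2.2] at h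
  obtain ⟨-, γ, hγ, hsub⟩ := mem_adjoinFilter.1 h
  by_cases hmid : ∃ δ ∈ P, γ ≤ δ ∧ δ < δ₀
  · obtain ⟨δ, hδ, hγδ, hδδ₀⟩ := hmid
    have hlt : u δ < δ₀ := hu.apply_lt δ₀ hδ₀ δ hδ hδδ₀
    refine ⟨u δ, hlt.trans (hu.lt_apply hδ₀), subset_EDcl S _ (mem_image_of_mem u hδ), ?_⟩
    exact hsub ⟨⟨mem_genD_of_mem_A S hγδ (hu.isSeed δ hδ).1, (hu.isSeed δ hδ).2.1⟩, hlt⟩ |>.1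
  · have hbelow : ∀ δ ∈ P, δ < δ₀ → δ < γ :=
      fun δ hδ hδδ₀ => not_le.1 fun hγδ => hmid ⟨δ, hδ, hγδ, hδδ₀⟩
    obtain ⟨β, hγβ, hβδ₀, hgap⟩ := hv.exists_gap hγ hbelow
    obtain ⟨β', hββ', hβ'δ₀⟩ := (S.hElim δ₀ hδ₀E).2 β hβδ₀
    obtain ⟨ρ, ⟨hρgen, hρX⟩, hρδ₀⟩ := (hu.isPositiveAt δ₀ hδ₀).2 β' hβ'δ₀
    exact (notMem_EDcl_of_gap S hgap hββ' hρgen hρδ₀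
      (hsub ⟨⟨antitone_genD (hγβ.trans hββ'.le) hρgen, hρX⟩, hρδ₀⟩).1).elim

lemma disjoint_EDcl_image (hu : IsSeedFamily S X P u) (hv : IsSeedFamily S X P v)
    (hne : ∀ δ ∈ P, u δ ≠ v δ) : Disjoint (EDcl κ S (u '' P)) (EDcl κ S (v '' P)) := by
  refine disjoint_left.2 fun ζ => ?_
  induction ζ using WellFoundedLT.induction with
  | ind ζ IH =>
  intro hU hV
  rcases mem_EDcl_cases S hU with ⟨δ₁, h₁, rfl⟩ | ⟨hζ, hUζ⟩ <;>
    rcases mem_EDcl_cases S hV with hζV | ⟨hζ', hVζ⟩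
  · obtain ⟨δ₂, h₂, he⟩ := hζV
    obtain rfl := eq_of_mem_A S (hv.isSeed δ₂ h₂).1 (he ▸ (hu.isSeed δ₁ h₁).1)
    exact hne δ₂ h₁ he.symm
  · obtain ⟨τ, hτ, hτU, hτV⟩ := hu.exists_lt_mem_EDcl_inter hv h₁ hVζ
    exact IH τ hτ hτU hτV
  · obtain ⟨δ₂, h₂, rfl⟩ := hζV
    obtain ⟨τ, hτ, hτV, hτU⟩ := hv.exists_lt_mem_EDcl_inter hu h₂ hUζ
    exact IH τ hτ hτU hτV
  · obtain ⟨τ, ⟨hτU, hτδ⟩, hτV, -⟩ := nonempty_of_mem_D S hζ (inter_mem_D S hζ hUζ hVζ)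
    exact IH τ (hτδ.trans (delta_lt S hζ)) hτU hτV

end IsSeedFamily

end Seeds

/-- Lemma 4: if `X` is `(E,D̄)`-closed and in `D^+(κ)` then it contains two disjoint
`(E,D̄)`-closed subsets in `D^+(κ)`. -/
theorem exists_disjoint_closed_subsets (κ : Cardinal.{u}) (S : EDSetup κ)
    (X : Set κ.ord.ToType) (hcl : EDClosed κ S X) (hpos : X ∈ DKplus κ S.A) :
    ∃ B C : Set κ.ord.ToType, B ⊆ X ∧ C ⊆ X ∧ Disjoint B C ∧
      EDClosed κ S B ∧ EDClosed κ S C ∧ B ∈ DKplus κ S.A ∧ C ∈ DKplus κ S.A := by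
  have : Nonempty κ.ord.ToType := Ordinal.nonempty_toType_iff.2 S.hreg.ord_pos.ne'
  choose f hf using inter_genD_nonempty hpos
  choose! u v huv hu hv using fun δ (hδ : IsPositiveAt S X δ) => exists_two_seeds S hcl hδ
  obtain ⟨C, hCE, hC⟩ := S.hEclub
  set P := {δ ∈ C | ∀ x < δ, max (f x) (max (u x) (v x)) < δ}
  have hPpos : ∀ δ ∈ P, IsPositiveAt S X δ := fun δ hδ =>
    ⟨hCE hδ.1, fun γ hγ => ⟨f γ, hf γ, (max_lt_iff.1 (hδ.2 γ hγ)).1⟩⟩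
  have hPunb : ∀ α, ∃ δ ∈ P, α < δ := fun α => by
    obtain ⟨δ, hδC, hαδ, hδ⟩ := exists_closurePoint S.hreg S.hunc hC _ α
    exact ⟨δ, ⟨hδC, hδ⟩, hαδ⟩
  have hU : IsSeedFamily S X P u := ⟨hPpos, fun δ hδ => hu δ (hPpos δ hδ),
    fun δ hδ x _ hx => (max_lt_iff.1 (max_lt_iff.1 (hδ.2 x hx)).2).1⟩
  have hV : IsSeedFamily S X P v := ⟨hPpos, fun δ hδ => hv δ (hPpos δ hδ),
    fun δ hδ x _ hx => (max_lt_iff.1 (max_lt_iff.1 (hδ.2 x hx)).2).2⟩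
  exact ⟨_, _, EDcl_subset S hcl hU.image_subset, EDcl_subset S hcl hV.image_subset,
    hU.disjoint_EDcl_image hV fun δ hδ => huv δ (hPpos δ hδ), edClosed_EDcl S _,
    edClosed_EDcl S _,
    DKplus_mono (subset_EDcl S _) (mem_DKplus_image S hPunb fun δ hδ => (hU.isSeed δ hδ).1),
    DKplus_mono (subset_EDcl S _) (mem_DKplus_image S hPunb fun δ hδ => (hV.isSeed δ hδ).1)⟩
end
end

section
/- The tower-destroying partial order 𝕋_a is κ-closed: for every limit ordinal γ < κ, every ≤-decreasing sequence ⟨p_i : i < γ⟩ of conditions in 𝕋_a has a lower bound in 𝕋_a. -/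
/-!
The lower bound is the coordinatewise union of the sequence. Regularity of `κ` keeps its
domain, the supremum of the domains, below `κ` and its promise set `⋃ x_i` of size `< κ`.
A promise `ξ ∈ x_i` is kept at every `η` in the new part of the domain because `η` already
lies in the domain of some condition further down the sequence, and that condition respects
the promises of `p i`.
-/

noncomputable section

open Cardinal Set

universe u

/-- A condition of the tower-destroying forcing `𝕋_a`: a pair `(s, x)` where
`s : γ → 2` for some `γ < κ` (coded by its domain `dom` and the set
`S = {η < dom : s η = 1}`) and `x ⊆ ε` with `|x| < κ`. -/
structure TowerCond (κ ε : Cardinal.{u}) where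
  dom : κ.ord.ToType
  S : Set κ.ord.ToType
  hS : S ⊆ Iio dom
  x : Set ε.ord.ToType
  hx : #x < κ

/-- The order on `𝕋_a`: `(s₂, x₂) ≤ (s₁, x₁)` iff `s₁ ⊆ s₂`, `x₁ ⊆ x₂`, and
`χ_{a_ξ}(η) ≤ s₂(η)` for all `ξ ∈ x₁` and `η ∈ dom(s₂) \ dom(s₁)`. -/
def TowerLe (κ ε : Cardinal.{u}) (a : ε.ord.ToType → Set κ.ord.ToType)
    (q p : TowerCond κ ε) : Prop :=
  p.dom ≤ q.dom ∧ p.S = q.S ∩ Iio p.dom ∧ p.x ⊆ q.x ∧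
  ∀ ξ ∈ p.x, ∀ η, p.dom ≤ η → η < q.dom → η ∈ a ξ → η ∈ q.S

theorem exists_isLUB_range_of_mk_lt_cof {α ι : Type u} [LinearOrder α] [WellFoundedLT α]
    (f : ι → α) (h : #ι < Order.cof α) : ∃ d, IsLUB (range f) d := by
  have hbdd : BddAbove (range f) :=
    .of_not_isCofinal fun hcof => (mk_range_le.trans_lt h).not_ge (Order.cof_le hcof)
  obtain ⟨d, hd, hmin⟩ := wellFounded_lt.has_min (upperBounds (range f)) hbdd
  exact ⟨d, hd, fun b hb => not_lt.1 (hmin b hb)⟩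

section TowerForcing

variable {κ ε : Cardinal.{u}} {a : ε.ord.ToType → Set κ.ord.ToType}

theorem towerLe_refl (p : TowerCond κ ε) : TowerLe κ ε a p p :=
  ⟨le_rfl, (inter_eq_left.2 p.hS).symm, subset_rfl,
    fun _ _ _ hle hlt _ => absurd hlt (not_lt.2 hle)⟩

theorem TowerLe.S_subset {p q : TowerCond κ ε} (h : TowerLe κ ε a q p) : p.S ⊆ q.S :=
  h.2.1 ▸ inter_subset_left

def TowerCond.iUnion {ι : Type*} (p : ι → TowerCond κ ε) (d : κ.ord.ToType)
    (hd : ∀ i, (p i).dom ≤ d) (hx : #(⋃ i, (p i).x) < κ) : TowerCond κ ε where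
  dom := d
  S := ⋃ i, (p i).S
  hS := iUnion_subset fun i => (p i).hS.trans (Iio_subset_Iio (hd i))
  x := ⋃ i, (p i).x
  hx := hx

theorem towerLe_iUnion {ι : Type*} [Preorder ι] [IsDirectedOrder ι] {p : ι → TowerCond κ ε}
    (hp : ∀ i j, i ≤ j → TowerLe κ ε a (p j) (p i)) {d : κ.ord.ToType}
    (hd : IsLUB (range fun i => (p i).dom) d) (hx : #(⋃ i, (p i).x) < κ) (i : ι) :
    TowerLe κ ε a (TowerCond.iUnion p d (fun j => hd.1 ⟨j, rfl⟩) hx) (p i) := by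
  refine ⟨hd.1 ⟨i, rfl⟩, ?_, subset_iUnion (fun j => (p j).x) i, ?_⟩
  · refine Subset.antisymm (fun y hy => ⟨mem_iUnion.2 ⟨i, hy⟩, (p i).hS hy⟩) ?_
    rintro y ⟨hy, hyi⟩
    obtain ⟨j, hyj⟩ := mem_iUnion.1 hy
    obtain ⟨k, hik, hjk⟩ := directed_of (· ≤ ·) i j
    rw [(hp i k hik).2.1]
    exact ⟨(hp j k hjk).S_subset hyj, hyi⟩
  · intro ξ hξ η hiη hηd hηa
    obtain ⟨_, ⟨j, rfl⟩, hηj⟩ := (lt_isLUB_iff hd).1 hηd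
    obtain ⟨k, hik, hjk⟩ := directed_of (· ≤ ·) i j
    have hηk : η < (p k).dom := hηj.trans_le (hp j k hjk).1
    exact mem_iUnion.2 ⟨k, (hp i k hik).2.2.2 ξ hξ η hiη hηk hηa⟩

theorem exists_towerLe_of_directed {ι : Type u} [Preorder ι] [IsDirectedOrder ι]
    {p : ι → TowerCond κ ε} (hκ : κ.IsRegular) (hι : #ι < κ)
    (hp : ∀ i j, i ≤ j → TowerLe κ ε a (p j) (p i)) :
    ∃ q : TowerCond κ ε, ∀ i, TowerLe κ ε a q (p i) := by
  obtain ⟨d, hd⟩ := exists_isLUB_range_of_mk_lt_cof (fun i => (p i).dom)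
    (by rwa [Ordinal.cof_toType, hκ.cof_ord])
  have hx : #(⋃ i, (p i).x) < κ :=
    mk_iUnion_le_sum_mk.trans_lt (sum_lt_of_isRegular hκ hι fun i => (p i).hx)
  exact ⟨_, towerLe_iUnion hp hd hx⟩

end TowerForcing

theorem towerForcing_closed_general (κ ε : Cardinal.{u}) (hκ : κ.IsRegular)
    (a : ε.ord.ToType → Set κ.ord.ToType)
    (γ : Ordinal.{u}) (hγ : γ < κ.ord)
    (p : γ.ToType → TowerCond κ ε)
    (hdec : ∀ i j, i < j → TowerLe κ ε a (p j) (p i)) :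
    ∃ q : TowerCond κ ε, ∀ i, TowerLe κ ε a q (p i) := by
  have hcard : #γ.ToType < κ := by rwa [mk_toType, ← lt_ord]
  refine exists_towerLe_of_directed hκ hcard fun i j hij => ?_
  rcases hij.lt_or_eq with hlt | rfl
  · exact hdec i j hlt
  · exact towerLe_refl (p i)

/-- `𝕋_a` is `κ`-closed: every decreasing sequence of conditions of limit length
`γ < κ` has a lower bound. -/
theorem towerForcing_closed (κ ε : Cardinal.{u}) (hκ : κ.IsRegular) (hκu : ℵ₀ < κ)
    (hε : ε.IsRegular) (hκε : κ < ε)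
    (a : ε.ord.ToType → Set κ.ord.ToType)
    (hacard : ∀ ξ, #(a ξ) = κ)
    (hamono : ∀ ξ η, ξ < η → ssubStar κ (a ξ) (a η))
    (γ : Ordinal.{u}) (hγ : γ < κ.ord) (hlim : Order.IsSuccLimit γ)
    (p : γ.ToType → TowerCond κ ε)
    (hdec : ∀ i j, i < j → TowerLe κ ε a (p j) (p i)) :
    ∃ q : TowerCond κ ε, ∀ i, TowerLe κ ε a q (p i) :=
  towerForcing_closed_general κ ε hκ a γ hγ p hdec
end
end

section
/- Assume κ^{<κ} = κ. Then the tower-destroying partial order 𝕋_a has the κ⁺-chain condition: every antichain in 𝕋_a has cardinality at most κ. Indeed, any two conditions (s, x₁) and (s, x₂) with the same first coordinate are compatible. -/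
noncomputable section

open Cardinal Set

universe u

/-! Two conditions with the same stem `s` are compatible: enlarge the side condition to
`x₁ ∪ x₂`, which is still of size `< κ` as `κ` is infinite. An antichain therefore has
at most one condition per stem, and there are `∑_{γ < κ} 2^|γ| ≤ κ · κ^{<κ} = κ` stems. -/

namespace TowerCond

variable {κ ε : Cardinal.{u}}

def Compatible (a : ε.ord.ToType → Set κ.ord.ToType) (p q : TowerCond κ ε) : Prop :=
  ∃ r : TowerCond κ ε, TowerLe κ ε a r p ∧ TowerLe κ ε a r q

def withX (p : TowerCond κ ε) (x : Set ε.ord.ToType) (hx : #x < κ) : TowerCond κ ε :=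
  { p with x, hx }

theorem towerLe_of_stem_eq (a : ε.ord.ToType → Set κ.ord.ToType) {p q : TowerCond κ ε}
    (hdom : q.dom = p.dom) (hS : q.S = p.S) (hx : p.x ⊆ q.x) : TowerLe κ ε a q p := by
  refine ⟨hdom.ge, ?_, hx, fun _ _ η hpη hηq _ => ?_⟩
  · rw [← hS, inter_eq_left.2 (hdom ▸ q.hS)]
  · exact absurd (hdom ▸ hηq) hpη.not_gt

theorem compatible_of_stem_eq (hκ : ℵ₀ ≤ κ) (a : ε.ord.ToType → Set κ.ord.ToType)
    {p q : TowerCond κ ε} (hdom : p.dom = q.dom) (hS : p.S = q.S) : Compatible a p q :=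
  have hx : #(p.x ∪ q.x : Set _) < κ := (mk_union_le _ _).trans_lt (add_lt_of_lt hκ p.hx q.hx)
  ⟨p.withX _ hx, towerLe_of_stem_eq a rfl rfl subset_union_left,
    towerLe_of_stem_eq a hdom hS subset_union_right⟩

def stem (p : TowerCond κ ε) : Σ d : κ.ord.ToType, Set (Iio d) :=
  ⟨p.dom, {η | ↑η ∈ p.S}⟩

theorem stem_eq_iff {p q : TowerCond κ ε} : p.stem = q.stem ↔ p.dom = q.dom ∧ p.S = q.S := by
  obtain ⟨d, S, hS, -, -⟩ := p
  obtain ⟨d', S', hS', -, -⟩ := q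
  simp only [stem, Sigma.mk.injEq]
  constructor
  · rintro ⟨rfl, hSS'⟩
    have hmem : ∀ η (hη : η < d), η ∈ S ↔ η ∈ S' := fun η hη => by
      simpa using Set.ext_iff.1 (eq_of_heq hSS') ⟨η, hη⟩
    exact ⟨rfl, Set.ext fun η => ⟨fun h => (hmem η (hS h)).1 h, fun h => (hmem η (hS' h)).2 h⟩⟩
  · rintro ⟨rfl, rfl⟩
    exact ⟨rfl, .rfl⟩

theorem mk_stem_le (hκ : ℵ₀ ≤ κ) (hpow : κ ^< κ = κ) :
    #(Σ d : κ.ord.ToType, Set (Iio d)) ≤ κ := by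
  have hstems : ∀ d : κ.ord.ToType, #(Set (Iio d)) ≤ κ := fun d =>
    calc #(Set (Iio d)) = 2 ^ #(Iio d) := mk_set
      _ ≤ κ ^ #(Iio d) := power_le_power_right (ofNat_le_aleph0.trans hκ)
      _ ≤ κ ^< κ := le_powerlt κ (by simpa using mk_Iio_lt d)
      _ = κ := hpow
  calc #(Σ d : κ.ord.ToType, Set (Iio d)) ≤ sum fun _ : κ.ord.ToType => κ :=
        mk_sigma _ ▸ sum_le_sum _ _ hstems
    _ = κ := by rw [sum_const', mk_ord_toType, mul_eq_self hκ]

theorem mk_le_of_pairwise_not_compatible (hκ : ℵ₀ ≤ κ) (hpow : κ ^< κ = κ)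
    (a : ε.ord.ToType → Set κ.ord.ToType) {A : Set (TowerCond κ ε)}
    (hA : A.Pairwise fun p q => ¬ Compatible a p q) : #A ≤ κ := by
  have hinj : A.InjOn stem := fun p hp q hq hpq => by
    by_contra hne
    obtain ⟨hdom, hS⟩ := stem_eq_iff.1 hpq
    exact hA hp hq hne (compatible_of_stem_eq hκ a hdom hS)
  exact (mk_le_of_injective (injOn_iff_injective.1 hinj)).trans (mk_stem_le hκ hpow)

end TowerCond

open TowerCond in
theorem towerForcing_cc_general (κ ε : Cardinal.{u}) (hκu : ℵ₀ < κ) (hpow : κ ^< κ = κ)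
    (a : ε.ord.ToType → Set κ.ord.ToType) :
    (∀ A : Set (TowerCond κ ε),
      (∀ p ∈ A, ∀ q ∈ A, p ≠ q →
        ¬ ∃ r : TowerCond κ ε, TowerLe κ ε a r p ∧ TowerLe κ ε a r q) →
      #A ≤ κ) ∧
    ∀ p q : TowerCond κ ε, p.dom = q.dom → p.S = q.S →
      ∃ r : TowerCond κ ε, TowerLe κ ε a r p ∧ TowerLe κ ε a r q :=
  ⟨fun _ hA => mk_le_of_pairwise_not_compatible hκu.le hpow a hA,
    fun _ _ => compatible_of_stem_eq hκu.le a⟩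

/-- Assuming `κ^{<κ} = κ`, `𝕋_a` has the `κ⁺`-chain condition: every antichain has
cardinality at most `κ`; indeed any two conditions with the same first coordinate
are compatible. -/
theorem towerForcing_cc (κ ε : Cardinal.{u}) (hκ : κ.IsRegular) (hκu : ℵ₀ < κ)
    (hε : ε.IsRegular) (hκε : κ < ε) (hpow : κ ^< κ = κ)
    (a : ε.ord.ToType → Set κ.ord.ToType)
    (hacard : ∀ ξ, #(a ξ) = κ)
    (hamono : ∀ ξ η, ξ < η → ssubStar κ (a ξ) (a η)) :
    (∀ A : Set (TowerCond κ ε),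
      (∀ p ∈ A, ∀ q ∈ A, p ≠ q →
        ¬ ∃ r : TowerCond κ ε, TowerLe κ ε a r p ∧ TowerLe κ ε a r q) →
      #A ≤ κ) ∧
    ∀ p q : TowerCond κ ε, p.dom = q.dom → p.S = q.S →
      ∃ r : TowerCond κ ε, TowerLe κ ε a r p ∧ TowerLe κ ε a r q :=
  towerForcing_cc_general κ ε hκu hpow a
end
end
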